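/- For every si-logic L, the finite Kripke frames validating the largest modal companion σ(L) = Grz + {φ^t : φ ∈ L} are exactly the finite partial orders validating L: a finite Kripke frame (W, R) validates σ(L) if and only if R is a partial order on W and the poset (W, R) validates L as an intuitionistic Kripke frame. -/

import Mathlib

/-- Intuitionistic propositional formulas over variables `p₀, p₁, …`. -/
inductive IForm : Type
  | var : ℕ → IForm
  | bot : IForm
  | and : IForm → IForm → IForm
  | or : IForm → IForm → IForm
  | imp : IForm → IForm → IForm

namespace IForm

/-- Uniform substitution. -/
def subst (σ : ℕ → IForm) : IForm → IForm
  | var n => σ n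
  | bot => bot
  | and φ ψ => and (subst σ φ) (subst σ ψ)
  | or φ ψ => or (subst σ φ) (subst σ ψ)
  | imp φ ψ => imp (subst σ φ) (subst σ ψ)

/-- Biconditional `φ ↔ ψ`. -/
def biimp (φ ψ : IForm) : IForm := and (imp φ ψ) (imp ψ φ)

end IForm

/-- The theorems of the intuitionistic propositional calculus `IPC`, given by a
standard Hilbert-style axiomatization (all axioms are schemes, so `IPC` is
closed under uniform substitution) together with modus ponens. -/
inductive IPC : IForm → Prop
  | ax1 (φ ψ : IForm) : IPC (φ.imp (ψ.imp φ))
  | ax2 (φ ψ χ : IForm) : IPC ((φ.imp (ψ.imp χ)).imp ((φ.imp ψ).imp (φ.imp χ)))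
  | andE1 (φ ψ : IForm) : IPC ((φ.and ψ).imp φ)
  | andE2 (φ ψ : IForm) : IPC ((φ.and ψ).imp ψ)
  | andI (φ ψ : IForm) : IPC (φ.imp (ψ.imp (φ.and ψ)))
  | orI1 (φ ψ : IForm) : IPC (φ.imp (φ.or ψ))
  | orI2 (φ ψ : IForm) : IPC (ψ.imp (φ.or ψ))
  | orE (φ ψ χ : IForm) : IPC ((φ.imp χ).imp ((ψ.imp χ).imp ((φ.or ψ).imp χ)))
  | exfalso (φ : IForm) : IPC (IForm.bot.imp φ)
  | mp (φ ψ : IForm) : IPC (φ.imp ψ) → IPC φ → IPC ψ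

/-- A superintuitionistic logic: a set of formulas containing `IPC` and closed
under modus ponens and uniform substitution. -/
def SuperIntuitionistic (L : Set IForm) : Prop :=
  (∀ φ, IPC φ → φ ∈ L) ∧
  (∀ φ ψ, φ.imp ψ ∈ L → φ ∈ L → ψ ∈ L) ∧
  (∀ φ (σ : ℕ → IForm), φ ∈ L → φ.subst σ ∈ L)
/-- Modal formulas over variables `p₀, p₁, …`. -/
inductive MForm : Type
  | var : ℕ → MForm
  | bot : MForm
  | and : MForm → MForm → MForm
  | or : MForm → MForm → MForm
  | imp : MForm → MForm → MForm
  | box : MForm → MForm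

namespace MForm

/-- Uniform substitution. -/
def subst (σ : ℕ → MForm) : MForm → MForm
  | var n => σ n
  | bot => bot
  | and φ ψ => and (subst σ φ) (subst σ ψ)
  | or φ ψ => or (subst σ φ) (subst σ ψ)
  | imp φ ψ => imp (subst σ φ) (subst σ ψ)
  | box φ => box (subst σ φ)

end MForm

/-- Classical evaluation of a modal formula, treating variables and boxed
formulas as atoms. -/
def MBoolEval (v : ℕ → Prop) (b : MForm → Prop) : MForm → Prop
  | .var n => v n
  | .bot => False
  | .and φ ψ => MBoolEval v b φ ∧ MBoolEval v b ψ
  | .or φ ψ => MBoolEval v b φ ∨ MBoolEval v b ψ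
  | .imp φ ψ => MBoolEval v b φ → MBoolEval v b ψ
  | .box φ => b φ

/-- Classical propositional tautologies in the modal language. -/
def MTaut (φ : MForm) : Prop := ∀ v b, MBoolEval v b φ

/-- A normal modal logic: contains all classical tautologies and the axiom
`□(p→q) → (□p→□q)`, and is closed under modus ponens, uniform substitution,
and necessitation. -/
def NormalModal (L : Set MForm) : Prop :=
  (∀ φ, MTaut φ → φ ∈ L) ∧
  ((MForm.box ((MForm.var 0).imp (MForm.var 1))).imp
      ((MForm.box (MForm.var 0)).imp (MForm.box (MForm.var 1))) ∈ L) ∧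
  (∀ φ ψ, φ.imp ψ ∈ L → φ ∈ L → ψ ∈ L) ∧
  (∀ φ (σ : ℕ → MForm), φ ∈ L → φ.subst σ ∈ L) ∧
  (∀ φ, φ ∈ L → φ.box ∈ L)

/-- `M + Ax`: the least normal modal logic containing `M ∪ Ax`. -/
def ModalPlus (M Ax : Set MForm) : Set MForm :=
  {φ | ∀ L : Set MForm, NormalModal L → M ⊆ L → Ax ⊆ L → φ ∈ L}

/-- The least normal modal logic `K`. -/
def ModalK : Set MForm := {φ | ∀ L : Set MForm, NormalModal L → φ ∈ L}

/-- `K4 = K + (□p → □□p)`. -/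
def ModalK4 : Set MForm :=
  ModalPlus ModalK {(MForm.box (MForm.var 0)).imp (MForm.box (MForm.box (MForm.var 0)))}

/-- `S4 = K4 + (□p → p)`. -/
def ModalS4 : Set MForm :=
  ModalPlus ModalK4 {(MForm.box (MForm.var 0)).imp (MForm.var 0)}

/-- `Grz = S4 + (□(□(p → □p) → p) → □p)`. -/
def ModalGrz : Set MForm :=
  ModalPlus ModalS4
    {(MForm.box ((MForm.box ((MForm.var 0).imp (MForm.box (MForm.var 0)))).imp
        (MForm.var 0))).imp (MForm.box (MForm.var 0))}

/-- Kripke forcing for modal formulas on a frame `(W, R)`. -/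
def MForces {W : Type} (R : W → W → Prop) (v : ℕ → Set W) : W → MForm → Prop
  | w, .var n => w ∈ v n
  | _, .bot => False
  | w, .and φ ψ => MForces R v w φ ∧ MForces R v w ψ
  | w, .or φ ψ => MForces R v w φ ∨ MForces R v w ψ
  | w, .imp φ ψ => MForces R v w φ → MForces R v w ψ
  | w, .box φ => ∀ u, R w u → MForces R v u φ

/-- Validity of a modal formula in a Kripke frame. -/
def MValidIn (W : Type) (R : W → W → Prop) (φ : MForm) : Prop :=
  ∀ (v : ℕ → Set W) (w : W), MForces R v w φ

/-- A frame validates a logic if every formula of the logic is valid in it. -/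
def MValidLogic (W : Type) (R : W → W → Prop) (L : Set MForm) : Prop :=
  ∀ φ ∈ L, MValidIn W R φ

/-- `Fin(L) = Fin(L')`: the two modal logics are validated by the same finite
Kripke frames. -/
def MSameFin (L L' : Set MForm) : Prop :=
  ∀ (W : Type) [Fintype W] (R : W → W → Prop), MValidLogic W R L ↔ MValidLogic W R L'

/-- `fmp_M(L) = {L' ∈ NExt M : Fin(L') = Fin(L)}`. -/
def modalFmpSpan (M L : Set MForm) : Set (Set MForm) :=
  {L' | NormalModal L' ∧ M ⊆ L' ∧ MSameFin L L'}

/-- `deg_M(L)`: the degree of fmp of `L` over `M`. -/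
def modalDeg (M L : Set MForm) : Cardinal := Cardinal.mk (modalFmpSpan M L)

/-- The Gödel translation of intuitionistic formulas into modal formulas. -/
def godel : IForm → MForm
  | .var n => .box (.var n)
  | .bot => .bot
  | .and φ ψ => .and (godel φ) (godel ψ)
  | .or φ ψ => .or (godel φ) (godel ψ)
  | .imp φ ψ => .box ((godel φ).imp (godel ψ))

/-- The largest modal companion `σ(L) = Grz + {φ^t : φ ∈ L}` of an si-logic. -/
def sigmaCompanion (L : Set IForm) : Set MForm :=
  ModalPlus ModalGrz (godel '' L)

/-- Intuitionistic Kripke forcing over a binary relation. -/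
def IForcesRel {W : Type} (R : W → W → Prop) (v : ℕ → Set W) : W → IForm → Prop
  | w, .var n => w ∈ v n
  | _, .bot => False
  | w, .and φ ψ => IForcesRel R v w φ ∧ IForcesRel R v w ψ
  | w, .or φ ψ => IForcesRel R v w φ ∨ IForcesRel R v w ψ
  | w, .imp φ ψ => ∀ u, R w u → IForcesRel R v u φ → IForcesRel R v u ψ

/-- Intuitionistic validity on the frame `(W, R)` (valuations by `R`-upsets). -/
def IValidRel (W : Type) (R : W → W → Prop) (φ : IForm) : Prop :=
  ∀ v : ℕ → Set W, (∀ n, ∀ a b, R a b → a ∈ v n → b ∈ v n) →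
    ∀ w : W, IForcesRel R v w φ

/-!
The formulas valid in a Kripke frame form a normal modal logic, so a frame validates
`σ(L)` exactly when it validates the axioms `T`, `4`, `Grz` and the translations `φ^t`,
`φ ∈ L`. The axioms `T` and `4` correspond to reflexivity and transitivity. `Grz` fails
at `x` whenever `x R y R x` with `x ≠ y` (take `p` false exactly at `y`), and on a finite
transitive antisymmetric frame it holds by well-founded induction along the strict
converse of `R`. Finally `w ⊩ φ^t` is intuitionistic forcing of `φ` under the
valuation `n ↦ {u | every R-successor of u is in v n}`, which coincides with `v` when `R`
is reflexive and `v` consists of upsets, and consists of upsets when `R` is transitive.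
-/

namespace MForm

abbrev axT : MForm := (box (var 0)).imp (var 0)

abbrev axFour : MForm := (box (var 0)).imp (box (box (var 0)))

abbrev axGrz : MForm :=
  (box ((box ((var 0).imp (box (var 0)))).imp (var 0))).imp (box (var 0))

end MForm

open MForm

section ModalPlus

variable {M Ax L : Set MForm}

theorem modalPlus_subset (hL : NormalModal L) (hM : M ⊆ L) (hAx : Ax ⊆ L) :
    ModalPlus M Ax ⊆ L :=
  fun _ h => h L hL hM hAx

theorem subset_modalPlus_left : M ⊆ ModalPlus M Ax :=
  fun _ h _ _ hM _ => hM h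

theorem subset_modalPlus_right : Ax ⊆ ModalPlus M Ax :=
  fun _ h _ _ _ hAx => hAx h

theorem modalK_subset (hL : NormalModal L) : ModalK ⊆ L :=
  fun _ h => h L hL

theorem modalGrz_subset (hL : NormalModal L) (hT : axT ∈ L) (hFour : axFour ∈ L)
    (hGrz : axGrz ∈ L) : ModalGrz ⊆ L :=
  modalPlus_subset hL
    (modalPlus_subset hL
      (modalPlus_subset hL (modalK_subset hL) (Set.singleton_subset_iff.mpr hFour))
      (Set.singleton_subset_iff.mpr hT))
    (Set.singleton_subset_iff.mpr hGrz)

theorem axT_mem_modalGrz : axT ∈ ModalGrz :=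
  subset_modalPlus_left (subset_modalPlus_right rfl)

theorem axFour_mem_modalGrz : axFour ∈ ModalGrz :=
  subset_modalPlus_left (subset_modalPlus_left (subset_modalPlus_right rfl))

theorem axGrz_mem_modalGrz : axGrz ∈ ModalGrz :=
  subset_modalPlus_right rfl

end ModalPlus

section SigmaCompanion

variable {L : Set IForm}

theorem modalGrz_subset_sigmaCompanion : ModalGrz ⊆ sigmaCompanion L :=
  subset_modalPlus_left

theorem godel_mem_sigmaCompanion {φ : IForm} (hφ : φ ∈ L) : godel φ ∈ sigmaCompanion L :=
  subset_modalPlus_right ⟨φ, hφ, rfl⟩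

end SigmaCompanion

section Frame

variable {W : Type} {R : W → W → Prop}

theorem mForces_subst (v : ℕ → Set W) (σ : ℕ → MForm) (φ : MForm) (w : W) :
    MForces R v w (φ.subst σ) ↔ MForces R (fun n => {u | MForces R v u (σ n)}) w φ := by
  induction φ generalizing w <;> simp only [MForm.subst, MForces, Set.mem_ofPred_eq, *]

theorem mForces_of_mTaut {φ : MForm} (h : MTaut φ) (v : ℕ → Set W) (w : W) :
    MForces R v w φ := by
  have eval_iff : ∀ ψ, MBoolEval (w ∈ v ·) (fun ψ => ∀ u, R w u → MForces R v u ψ) ψ ↔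
      MForces R v w ψ := by
    intro ψ
    induction ψ <;> simp only [MBoolEval, MForces, *]
  exact (eval_iff φ).mp (h _ _)

theorem normalModal_validIn : NormalModal {φ | MValidIn W R φ} :=
  ⟨fun _ h => mForces_of_mTaut h,
    fun _ _ hpq hp u hu => hpq u hu (hp u hu),
    fun _ _ hpq hp v w => hpq v w (hp v w),
    fun φ σ h v w => (mForces_subst v σ φ w).mpr (h _ w),
    fun _ h v _ u _ => h v u⟩

theorem refl_of_validIn_axT (h : MValidIn W R axT) (x : W) : R x x :=
  h (fun _ => {u | R x u}) x fun _ hu => hu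

theorem validIn_axT_of_refl (hrefl : ∀ x, R x x) : MValidIn W R axT :=
  fun _ w h => h w (hrefl w)

theorem trans_of_validIn_axFour (h : MValidIn W R axFour) (x y z : W) (hxy : R x y)
    (hyz : R y z) : R x z :=
  h (fun _ => {u | R x u}) x (fun _ hu => hu) y hxy z hyz

theorem validIn_axFour_of_trans (htrans : ∀ x y z, R x y → R y z → R x z) :
    MValidIn W R axFour :=
  fun _ _ h _ hu _ hs => h _ (htrans _ _ _ hu hs)

theorem antisymm_of_validIn_axGrz (h : MValidIn W R axGrz) (x y : W) (hxy : R x y)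
    (hyx : R y x) : x = y := by
  by_contra hne
  refine h (fun _ => {u | u ≠ y}) x ?_ y hxy rfl
  intro u _ hu huy
  exact hu x (huy ▸ hyx) hne y hxy rfl

theorem validIn_axGrz [Finite W] (htrans : ∀ x y z, R x y → R y z → R x z)
    (hanti : ∀ x y, R x y → R y x → x = y) : MValidIn W R axGrz := by
  intro v w hw
  have : IsTrans W (fun a b => R b a ∧ a ≠ b) :=
    ⟨fun a b c hba hcb => ⟨htrans _ _ _ hcb.1 hba.1, by
      rintro rfl
      exact hba.2 (hanti _ _ hcb.1 hba.1)⟩⟩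
  have : Std.Irrefl (fun a b => R b a ∧ a ≠ b) := ⟨fun _ h => h.2 rfl⟩
  have wf : WellFounded (fun a b : W => R b a ∧ a ≠ b) :=
    Finite.wellFounded_of_trans_of_irrefl _
  intro u
  induction u using wf.induction with
  | _ u ih =>
    intro hwu
    refine hw u hwu fun t hut ht s hts => ?_
    by_cases hsu : s = u
    · subst hsu
      exact hanti _ _ hts hut ▸ ht
    · exact ih s ⟨htrans _ _ _ hut hts, hsu⟩ (htrans _ _ _ hwu (htrans _ _ _ hut hts))

theorem mForces_godel_iff (v : ℕ → Set W) (φ : IForm) (w : W) :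
    MForces R v w (godel φ) ↔ IForcesRel R (fun n => {u | ∀ t, R u t → t ∈ v n}) w φ := by
  induction φ generalizing w <;>
    simp only [godel, MForces, IForcesRel, Set.mem_ofPred_eq, *]

theorem iValidRel_of_validIn_godel (hrefl : ∀ x, R x x) {φ : IForm}
    (h : MValidIn W R (godel φ)) : IValidRel W R φ := by
  intro v hv w
  have interior_eq : (fun n => {u | ∀ t, R u t → t ∈ v n}) = v := by
    funext n
    ext u
    exact ⟨fun hu => hu u (hrefl u), fun hu t hut => hv n u t hut hu⟩
  simpa only [interior_eq] using (mForces_godel_iff v φ w).mp (h v w)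

theorem validIn_godel_of_iValidRel (htrans : ∀ x y z, R x y → R y z → R x z) {φ : IForm}
    (h : IValidRel W R φ) : MValidIn W R (godel φ) :=
  fun v w => (mForces_godel_iff v φ w).mpr <|
    h (fun n => {u | ∀ t, R u t → t ∈ v n})
      (fun _ _ _ hab ha t hbt => ha t (htrans _ _ _ hab hbt)) w

end Frame

theorem finite_frames_of_sigmaCompanion_general (L : Set IForm)
    (W : Type) [Fintype W] (R : W → W → Prop) :
    MValidLogic W R (sigmaCompanion L) ↔
      ((∀ x, R x x) ∧ (∀ x y z, R x y → R y z → R x z) ∧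
        (∀ x y, R x y → R y x → x = y) ∧ (∀ φ ∈ L, IValidRel W R φ)) := by
  constructor
  · intro hval
    have hrefl := refl_of_validIn_axT (hval _ (modalGrz_subset_sigmaCompanion axT_mem_modalGrz))
    exact ⟨hrefl,
      trans_of_validIn_axFour (hval _ (modalGrz_subset_sigmaCompanion axFour_mem_modalGrz)),
      antisymm_of_validIn_axGrz (hval _ (modalGrz_subset_sigmaCompanion axGrz_mem_modalGrz)),
      fun φ hφ => iValidRel_of_validIn_godel hrefl (hval _ (godel_mem_sigmaCompanion hφ))⟩
  · rintro ⟨hrefl, htrans, hanti, hvalid⟩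
    refine modalPlus_subset normalModal_validIn
      (modalGrz_subset normalModal_validIn (validIn_axT_of_refl hrefl)
        (validIn_axFour_of_trans htrans) (validIn_axGrz htrans hanti)) ?_
    rintro _ ⟨φ, hφ, rfl⟩
    exact validIn_godel_of_iValidRel htrans (hvalid φ hφ)

/-- **Theorem.** For every si-logic `L`, a finite Kripke frame `(W, R)`
validates `σ(L)` iff `R` is a partial order on `W` and the poset `(W, R)`
validates `L` as an intuitionistic Kripke frame. -/
theorem finite_frames_of_sigmaCompanion (L : Set IForm) (hL : SuperIntuitionistic L)
    (W : Type) [Fintype W] (R : W → W → Prop) :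
    MValidLogic W R (sigmaCompanion L) ↔
      ((∀ x, R x x) ∧ (∀ x y z, R x y → R y z → R x z) ∧
        (∀ x y, R x y → R y x → x = y) ∧ (∀ φ ∈ L, IValidRel W R φ)) :=
  finite_frames_of_sigmaCompanion_general L W R
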